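/- Let f_θ(x) = W_L φ(W_{L−1} ⋯ φ(W_1 x)) be an L-layer network with ReLU activation φ(z) = max(z,0) applied entrywise, weights θ = (W₁,…,W_L). Let x ∈ ℝ^{n₁} with ‖x‖₂ ≤ B, and let ξ = (U₁,…,U_L) be perturbation matrices satisfying ‖U_l‖₂ ≤ (1/L)‖W_l‖₂ for all l ∈ {1,…,L}, where ‖·‖₂ is the spectral norm. Then ‖f_{θ+ξ}(x) − f_θ(x)‖₂ ≤ e·B·(∏_{l=1}^L ‖W_l‖₂)·Σ_{l=1}^L ‖U_l‖₂/‖W_l‖₂. -/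

import Mathlib

/-- The ReLU network `x ↦ W_{L-1} φ(W_{L-2} ⋯ φ(W_0 x))` evaluated layer by layer:
`reluNet d W x k` is the output after `k` matrix multiplications, with the ReLU
`φ(z) = max(z,0)` applied entrywise between consecutive multiplications. -/
noncomputable def reluNet (d : ℕ → ℕ)
    (W : (l : ℕ) → Matrix (Fin (d (l + 1))) (Fin (d l)) ℝ)
    (x : Fin (d 0) → ℝ) : (k : ℕ) → Fin (d k) → ℝ
  | 0 => x
  | (k + 1) => (W k).mulVec
      (if k = 0 then reluNet d W x k else fun j => max (reluNet d W x k j) 0)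

/-- The spectral (ℓ₂ operator) norm of a matrix. -/
noncomputable def specNorm {p q : ℕ} (A : Matrix (Fin p) (Fin q) ℝ) : ℝ :=
  ‖LinearMap.toContinuousLinearMap (Matrix.toEuclideanLin A)‖

/-!
Write `F_k`, `G_k` for the outputs of the perturbed and the unperturbed network after `k` layers.
The ReLU is 1-Lipschitz and fixes `0`, so `‖G_k‖ ≤ ‖x‖ ∏_{l<k} ‖W_l‖`, and the splitting
`F_{k+1} - G_{k+1} = (W_k + U_k)(φ F_k - φ G_k) + U_k φ G_k` gives
`‖F_{k+1} - G_{k+1}‖ ≤ (‖W_k‖ + ‖U_k‖) ‖F_k - G_k‖ + ‖U_k‖ ‖x‖ ∏_{l<k} ‖W_l‖`,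
which telescopes to `‖F_L - G_L‖ ≤ ‖x‖ (∏_l (‖W_l‖ + ‖U_l‖) - ∏_l ‖W_l‖)`.
If `‖U_l‖ ≤ ‖W_l‖ / L`, peeling off one factor at a time bounds this difference of products by
`(1 + 1/L)^L ∏_l ‖W_l‖ ∑_l ‖U_l‖ / ‖W_l‖`, and `(1 + 1/L)^L ≤ e`.
-/

open Finset
open scoped Matrix Matrix.Norms.L2Operator

lemma prod_add_sub_prod_le {ι : Type*} (s : Finset ι) {w u : ι → ℝ} {c : ℝ} (hc : 0 ≤ c)
    (hw : ∀ i ∈ s, 0 ≤ w i) (hu : ∀ i ∈ s, 0 ≤ u i) (huw : ∀ i ∈ s, u i ≤ c * w i) :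
    ∏ i ∈ s, (w i + u i) - ∏ i ∈ s, w i ≤ (1 + c) ^ #s * (∏ i ∈ s, w i) * ∑ i ∈ s, u i / w i := by
  induction s using Finset.cons_induction with
  | empty => simp
  | cons a s _ ih =>
    simp only [forall_mem_cons] at hw hu huw
    obtain ⟨hwa, hws⟩ := hw
    obtain ⟨hua, hus⟩ := hu
    obtain ⟨huwa, huws⟩ := huw
    set P := ∏ i ∈ s, w i
    set S := ∑ i ∈ s, u i / w i
    have hP : 0 ≤ P := prod_nonneg hws
    have hS : 0 ≤ S := sum_nonneg fun i hi => div_nonneg (hus i hi) (hws i hi)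
    have hR : 0 ≤ (1 + c) ^ #s * P * S := by positivity
    have hpow : 1 ≤ (1 + c) ^ (#s + 1) := one_le_pow₀ (by linarith)
    -- `u a / w a = 0` when `w a = 0`, but then `huwa` forces `u a = 0` as well.
    have hcancel : w a * (u a / w a) = u a := by
      rcases eq_or_ne (w a) 0 with h | h
      · simp [h, le_antisymm (by simpa [h] using huwa) hua]
      · exact mul_div_cancel₀ (u a) h
    rw [prod_cons, prod_cons, sum_cons, card_cons]
    calc (w a + u a) * ∏ i ∈ s, (w i + u i) - w a * P
        = (w a + u a) * (∏ i ∈ s, (w i + u i) - P) + u a * P := by ring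
      _ ≤ ((1 + c) * w a) * ((1 + c) ^ #s * P * S) + (1 + c) ^ (#s + 1) * (u a * P) := by
          refine add_le_add ?_ (le_mul_of_one_le_left (mul_nonneg hua hP) hpow)
          exact (mul_le_mul_of_nonneg_left (ih hws hus huws) (by linarith)).trans
            (mul_le_mul_of_nonneg_right (by linarith) hR)
      _ = (1 + c) ^ (#s + 1) * (w a * P) * (u a / w a + S) := by
          linear_combination (-(1 + c) ^ (#s + 1) * P) * hcancel

-- `Fin n → ℝ` carries the sup norm; the ℓ² norm is the one of `EuclideanSpace ℝ (Fin n)`.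
noncomputable def eucNorm {n : ℕ} (v : Fin n → ℝ) : ℝ := ‖WithLp.toLp 2 v‖

lemma eucNorm_eq_sqrt {n : ℕ} (v : Fin n → ℝ) : eucNorm v = √(∑ i, v i ^ 2) := by
  simp [eucNorm, EuclideanSpace.norm_eq]

lemma specNorm_eq_l2_opNorm {p q : ℕ} (A : Matrix (Fin p) (Fin q) ℝ) : specNorm A = ‖A‖ := rfl

lemma specNorm_nonneg {p q : ℕ} (A : Matrix (Fin p) (Fin q) ℝ) : 0 ≤ specNorm A := by
  rw [specNorm_eq_l2_opNorm]
  exact norm_nonneg A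

lemma specNorm_add_le {p q : ℕ} (A B : Matrix (Fin p) (Fin q) ℝ) :
    specNorm (A + B) ≤ specNorm A + specNorm B := by
  simp only [specNorm_eq_l2_opNorm]
  exact norm_add_le A B

lemma eucNorm_mulVec_le {p q : ℕ} (A : Matrix (Fin p) (Fin q) ℝ) (v : Fin q → ℝ) :
    eucNorm (A *ᵥ v) ≤ specNorm A * eucNorm v := by
  rw [specNorm_eq_l2_opNorm]
  exact A.l2_opNorm_mulVec (WithLp.toLp 2 v)

lemma eucNorm_add_le {n : ℕ} (v w : Fin n → ℝ) : eucNorm (v + w) ≤ eucNorm v + eucNorm w :=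
  norm_add_le (WithLp.toLp 2 v) (WithLp.toLp 2 w)

lemma eucNorm_nonneg {n : ℕ} (v : Fin n → ℝ) : 0 ≤ eucNorm v := norm_nonneg _

lemma eucNorm_le_of_abs_le {n : ℕ} {v w : Fin n → ℝ} (h : ∀ i, |v i| ≤ |w i|) :
    eucNorm v ≤ eucNorm w := by
  rw [eucNorm_eq_sqrt, eucNorm_eq_sqrt]
  exact Real.sqrt_le_sqrt (sum_le_sum fun i _ => sq_le_sq.mpr (h i))

noncomputable def layerAct {n : ℕ} (k : ℕ) (v : Fin n → ℝ) : Fin n → ℝ :=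
  if k = 0 then v else fun j => max (v j) 0

lemma layerAct_zero {n : ℕ} (k : ℕ) : layerAct k (0 : Fin n → ℝ) = 0 := by
  unfold layerAct
  split_ifs <;> simp [Pi.zero_def]

lemma abs_layerAct_sub_le {n : ℕ} (k : ℕ) (v w : Fin n → ℝ) (i : Fin n) :
    |layerAct k v i - layerAct k w i| ≤ |v i - w i| := by
  unfold layerAct
  split_ifs
  · exact le_rfl
  · exact abs_max_sub_max_le_abs (v i) (w i) 0

lemma eucNorm_layerAct_sub_le {n : ℕ} (k : ℕ) (v w : Fin n → ℝ) :
    eucNorm (layerAct k v - layerAct k w) ≤ eucNorm (v - w) :=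
  eucNorm_le_of_abs_le (abs_layerAct_sub_le k v w)

lemma eucNorm_layerAct_le {n : ℕ} (k : ℕ) (v : Fin n → ℝ) : eucNorm (layerAct k v) ≤ eucNorm v := by
  simpa [layerAct_zero] using eucNorm_layerAct_sub_le k v 0

section ReluNet

variable {d : ℕ → ℕ} (W U : (l : ℕ) → Matrix (Fin (d (l + 1))) (Fin (d l)) ℝ) (x : Fin (d 0) → ℝ)

lemma reluNet_succ (k : ℕ) : reluNet d W x (k + 1) = W k *ᵥ layerAct k (reluNet d W x k) := rfl

lemma eucNorm_reluNet_le (k : ℕ) :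
    eucNorm (reluNet d W x k) ≤ (∏ l ∈ range k, specNorm (W l)) * eucNorm x := by
  induction k with
  | zero => simp [reluNet]
  | succ k ih =>
    calc eucNorm (reluNet d W x (k + 1))
        ≤ specNorm (W k) * eucNorm (layerAct k (reluNet d W x k)) := eucNorm_mulVec_le _ _
      _ ≤ specNorm (W k) * ((∏ l ∈ range k, specNorm (W l)) * eucNorm x) := by
          gcongr
          · exact specNorm_nonneg _
          · exact (eucNorm_layerAct_le _ _).trans ih
      _ = (∏ l ∈ range (k + 1), specNorm (W l)) * eucNorm x := by
          rw [prod_range_succ]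
          ring

lemma eucNorm_reluNet_add_sub_le (k : ℕ) :
    eucNorm (reluNet d (fun l => W l + U l) x k - reluNet d W x k) ≤
      (∏ l ∈ range k, (specNorm (W l) + specNorm (U l)) - ∏ l ∈ range k, specNorm (W l)) *
        eucNorm x := by
  induction k with
  | zero => simp [reluNet, eucNorm]
  | succ k ih =>
    set F := reluNet d (fun l => W l + U l) x
    set G := reluNet d W x
    set P := ∏ l ∈ range k, specNorm (W l)
    set Q := ∏ l ∈ range k, (specNorm (W l) + specNorm (U l))
    have hsplit : F (k + 1) - G (k + 1) =
        (W k + U k) *ᵥ (layerAct k (F k) - layerAct k (G k)) + U k *ᵥ layerAct k (G k) := by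
      simp only [F, G, reluNet_succ, Matrix.mulVec_sub, Matrix.add_mulVec]
      abel
    have hF : eucNorm (layerAct k (F k) - layerAct k (G k)) ≤ (Q - P) * eucNorm x :=
      (eucNorm_layerAct_sub_le k (F k) (G k)).trans ih
    have hG : eucNorm (layerAct k (G k)) ≤ P * eucNorm x :=
      (eucNorm_layerAct_le k (G k)).trans (eucNorm_reluNet_le W x k)
    have hWU := specNorm_add_le (W k) (U k)
    have hU := specNorm_nonneg (U k)
    calc eucNorm (F (k + 1) - G (k + 1))
        ≤ specNorm (W k + U k) * eucNorm (layerAct k (F k) - layerAct k (G k)) +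
            specNorm (U k) * eucNorm (layerAct k (G k)) := by
          rw [hsplit]
          exact (eucNorm_add_le _ _).trans
            (add_le_add (eucNorm_mulVec_le _ _) (eucNorm_mulVec_le _ _))
      _ ≤ (specNorm (W k) + specNorm (U k)) * ((Q - P) * eucNorm x) +
            specNorm (U k) * (P * eucNorm x) :=
          add_le_add (mul_le_mul hWU hF (eucNorm_nonneg _) (add_nonneg (specNorm_nonneg _) hU))
            (mul_le_mul_of_nonneg_left hG hU)
      _ = (Q * (specNorm (W k) + specNorm (U k)) - P * specNorm (W k)) * eucNorm x := by ring
      _ = _ := by rw [prod_range_succ, prod_range_succ]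

end ReluNet

theorem relu_net_perturbation_bound_general
    (L : ℕ) (d : ℕ → ℕ)
    (W U : (l : ℕ) → Matrix (Fin (d (l + 1))) (Fin (d l)) ℝ)
    (B : ℝ) (x : Fin (d 0) → ℝ)
    (hx : Real.sqrt (∑ i, x i ^ 2) ≤ B)
    (hU : ∀ l < L, specNorm (U l) ≤ (1 / (L : ℝ)) * specNorm (W l)) :
    Real.sqrt (∑ i, (reluNet d (fun l => W l + U l) x L i - reluNet d W x L i) ^ 2) ≤
      Real.exp 1 * B * (∏ l ∈ Finset.range L, specNorm (W l)) *
        ∑ l ∈ Finset.range L, specNorm (U l) / specNorm (W l) := by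
  rw [← eucNorm_eq_sqrt] at hx
  set P := ∏ l ∈ range L, specNorm (W l)
  set S := ∑ l ∈ range L, specNorm (U l) / specNorm (W l)
  have hPS : 0 ≤ P * S := mul_nonneg (prod_nonneg fun l _ => specNorm_nonneg _)
    (sum_nonneg fun l _ => div_nonneg (specNorm_nonneg _) (specNorm_nonneg _))
  have hprod : ∏ l ∈ range L, (specNorm (W l) + specNorm (U l)) - P ≤
      (1 + (L : ℝ)⁻¹) ^ L * (P * S) := by
    simpa [mul_assoc] using prod_add_sub_prod_le (range L) (by positivity)
      (fun l _ => specNorm_nonneg (W l)) (fun l _ => specNorm_nonneg (U l))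
      (fun l hl => hU l (mem_range.mp hl))
  calc _ = eucNorm (reluNet d (fun l => W l + U l) x L - reluNet d W x L) :=
        (eucNorm_eq_sqrt _).symm
    _ ≤ _ := eucNorm_reluNet_add_sub_le W U x L
    _ ≤ (1 + (L : ℝ)⁻¹) ^ L * (P * S) * B :=
        mul_le_mul hprod hx (eucNorm_nonneg x) (mul_nonneg (by positivity) hPS)
    _ ≤ Real.exp 1 * (P * S) * B := by
        gcongr
        · exact (eucNorm_nonneg x).trans hx
        · exact Real.one_add_inv_pow_le_exp
    _ = _ := by ring

/-- Lemma (Neyshabur et al.): perturbation bound for ReLU networks. If `‖x‖₂ ≤ B` and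
the perturbations satisfy `‖U_l‖₂ ≤ ‖W_l‖₂/L` for every layer, then
`‖f_{θ+ξ}(x) − f_θ(x)‖₂ ≤ e·B·(∏_l ‖W_l‖₂)·Σ_l ‖U_l‖₂/‖W_l‖₂`. -/
theorem relu_net_perturbation_bound
    (L : ℕ) (hL : 1 ≤ L) (d : ℕ → ℕ)
    (W U : (l : ℕ) → Matrix (Fin (d (l + 1))) (Fin (d l)) ℝ)
    (B : ℝ) (x : Fin (d 0) → ℝ)
    (hx : Real.sqrt (∑ i, x i ^ 2) ≤ B)
    (hU : ∀ l < L, specNorm (U l) ≤ (1 / (L : ℝ)) * specNorm (W l)) :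
    Real.sqrt (∑ i, (reluNet d (fun l => W l + U l) x L i - reluNet d W x L i) ^ 2) ≤
      Real.exp 1 * B * (∏ l ∈ Finset.range L, specNorm (W l)) *
        ∑ l ∈ Finset.range L, specNorm (U l) / specNorm (W l) :=
  relu_net_perturbation_bound_general L d W U B x hx hU
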